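/- arXiv:1401.2387 — 5 statements merged into one kernel-verified Lean document; each statement's English description precedes it below -/
import Mathlib

section
/- Let d ≥ 1 and m ≥ 1, and let f₀,…,f_m ∈ ℝ[s,t] be homogeneous polynomials of degree d, not all zero. Then the image of the associated map, i.e., the set of points [f₀(a,b) : ⋯ : f_m(a,b)] ∈ ℙ^m(ℂ) over all (a,b) ∈ ℂ² with (f₀(a,b),…,f_m(a,b)) ≠ (0,…,0), contains at most 2d points of the empty quadric Q_E = {[z₀ : ⋯ : z_m] ∈ ℙ^m(ℂ) : z₀² + ⋯ + z_m² = 0}. -/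
/-!
A point `[F(v)]` of the image lies on `Q_E` exactly when `v` is a zero of the binary form
`g = ∑ fᵢ²` of degree `2d`, and `g ≠ 0` because the `fᵢ` are real and not all zero.
A nonzero binary form of degree `n` has at most `n` zeros on `ℙ¹`: the zeros `[a : b]`
with `b ≠ 0` are roots of its dehomogenization, of degree at most `n`, and `[1 : 0]` is
a zero only when that degree drops. Since `[v] ↦ [F(v)]` is well defined, the image
meets `Q_E` in at most `2d` points.
-/

open MvPolynomial
open scoped LinearAlgebra.Projectivization

namespace MvPolynomial

variable {σ R : Type*} [CommSemiring R] {φ : MvPolynomial σ R} {n : ℕ}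

theorem IsHomogeneous.eval_smul (hφ : φ.IsHomogeneous n) (c : R) (x : σ → R) :
    eval (c • x) φ = c ^ n * eval x φ := by
  rw [eval_eq, eval_eq, Finset.mul_sum]
  refine Finset.sum_congr rfl fun s hs => ?_
  simp only [Pi.smul_apply, smul_eq_mul, mul_pow, Finset.prod_mul_distrib,
    Finset.prod_pow_eq_pow_sum, ← hφ.degree_eq_sum_deg_support hs]
  ring

theorem IsHomogeneous.eval_zero (hφ : φ.IsHomogeneous n) (hn : n ≠ 0) : eval 0 φ = 0 := by
  simpa [zero_pow hn] using hφ.eval_smul 0 0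

theorem IsHomogeneous.natDegree_aeval_X_one_le {q : MvPolynomial (Fin 2) R}
    (hq : q.IsHomogeneous n) :
    (MvPolynomial.aeval ![(Polynomial.X : Polynomial R), 1] q).natDegree ≤ n := by
  rw [q.as_sum, map_sum]
  refine Polynomial.natDegree_sum_le_of_forall_le _ _ fun s hs => ?_
  rw [aeval_monomial, Finsupp.prod_fintype _ _ (fun _ => pow_zero _), Fin.prod_univ_two]
  refine (Polynomial.natDegree_C_mul_le _ _).trans ?_
  simp only [Matrix.cons_val_zero, Matrix.cons_val_one, one_pow, mul_one]
  rw [hq.degree_eq_sum_deg_support hs]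
  exact (Polynomial.natDegree_X_pow_le _).trans (Finsupp.le_degree 0 s)

end MvPolynomial

namespace Projectivization

variable {K : Type*} [Field K]

theorem mk_eq_mk_div_one {v : Fin 2 → K} (hv : v ≠ 0) (h1 : v 1 ≠ 0) :
    mk K v hv = mk K ![v 0 / v 1, 1] (by simp) := by
  rw [mk_eq_mk_iff]
  refine ⟨Units.mk0 _ h1, ?_⟩
  ext i; fin_cases i <;> simp [mul_div_cancel₀ _ h1]

theorem mk_eq_mk_one_zero {v : Fin 2 → K} (hv : v ≠ 0) (h0 : v 0 ≠ 0) (h1 : v 1 = 0) :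
    mk K v hv = mk K ![1, 0] (by simp) := by
  rw [mk_eq_mk_iff]
  refine ⟨Units.mk0 _ h0, ?_⟩
  ext i; fin_cases i <;> simp [h1]

end Projectivization

namespace Polynomial

open Projectivization

variable {K : Type*} [Field K]

theorem eval_homogenize_of_eq_zero (p : K[X]) (n : ℕ) {x : Fin 2 → K} (hx : x 1 = 0) :
    MvPolynomial.eval x (p.homogenize n) = p.coeff n * x 0 ^ n := by
  rw [homogenize, MvPolynomial.eval_sum, Finset.sum_eq_single (n, 0)]
  · simp [MvPolynomial.eval_monomial, Finsupp.prod_fintype]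
  · rintro ⟨k, l⟩ hkl hne
    have hl : l ≠ 0 := by rintro rfl; simp_all
    simp [MvPolynomial.eval_monomial, Finsupp.prod_fintype, hx, hl]
  · simp

theorem encard_setOf_eval_homogenize_eq_zero_le {p : K[X]} {n : ℕ} (hp : p ≠ 0)
    (hn : p.natDegree ≤ n) :
    {x : ℙ K (Fin 2 → K) | MvPolynomial.eval x.rep (p.homogenize n) = 0}.encard ≤ n := by
  classical
  set affine : K → ℙ K (Fin 2 → K) := fun t => mk K ![t, 1] (by simp)
  set infinity : ℙ K (Fin 2 → K) := mk K ![1, 0] (by simp)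
  have hroots : (affine '' p.roots.toFinset).encard ≤ p.natDegree := by
    refine (Set.encard_image_le _ _).trans ?_
    rw [Set.encard_coe_eq_coe_finsetCard, Nat.cast_le]
    exact p.roots.toFinset_card_le.trans (card_roots' p)
  have hzero : ∀ x : ℙ K (Fin 2 → K), MvPolynomial.eval x.rep (p.homogenize n) = 0 →
      x ∈ affine '' p.roots.toFinset ∨ x = infinity ∧ p.coeff n = 0 := by
    intro x hx
    rw [← mk_rep x]
    by_cases h1 : x.rep 1 = 0
    · rw [eval_homogenize_of_eq_zero p n h1] at hx
      have h0 : x.rep 0 ≠ 0 := fun h0 => x.rep_nonzero (by ext i; fin_cases i <;> simp [h0, h1])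
      exact Or.inr
        ⟨mk_eq_mk_one_zero _ h0 h1, (mul_eq_zero.mp hx).resolve_right (pow_ne_zero _ h0)⟩
    · rw [eval_homogenize hn _ h1] at hx
      refine Or.inl ⟨x.rep 0 / x.rep 1, ?_, (mk_eq_mk_div_one _ h1).symm⟩
      simpa [hp, h1] using hx
  by_cases hc : p.coeff n = 0
  · have hlt : p.natDegree < n :=
      hn.lt_of_ne fun h => hp (leadingCoeff_eq_zero.mp (by rwa [leadingCoeff, h]))
    calc _ ≤ (insert infinity (affine '' p.roots.toFinset)).encard :=
          Set.encard_le_encard fun x hx => (hzero x hx).elim (Set.mem_insert_of_mem _)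
            fun h => h.1 ▸ Set.mem_insert _ _
      _ ≤ p.natDegree + 1 := (Set.encard_insert_le _ _).trans (by gcongr)
      _ ≤ n := by exact_mod_cast hlt
  · calc _ ≤ (affine '' p.roots.toFinset).encard :=
          Set.encard_le_encard fun x hx => (hzero x hx).resolve_right (by simp [hc])
      _ ≤ n := hroots.trans (by exact_mod_cast hn)

end Polynomial

namespace MvPolynomial

open Projectivization

variable {K σ ι : Type*} [Field K]

theorem IsHomogeneous.eval_rep_mk_eq_zero_iff {q : MvPolynomial σ K} {n : ℕ}
    (hq : q.IsHomogeneous n) {v : σ → K} (hv : v ≠ 0) :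
    eval (mk K v hv).rep q = 0 ↔ eval v q = 0 := by
  obtain ⟨c, hc⟩ := exists_smul_eq_mk_rep K v hv
  rw [← hc, Units.smul_def, hq.eval_smul, mul_eq_zero, or_iff_right (pow_ne_zero _ c.ne_zero)]

theorem IsHomogeneous.encard_setOf_eval_rep_eq_zero_le {q : MvPolynomial (Fin 2) K} {n : ℕ}
    (hq : q.IsHomogeneous n) (hq0 : q ≠ 0) :
    {x : ℙ K (Fin 2 → K) | eval x.rep q = 0}.encard ≤ n := by
  have hpq := Polynomial.homogenize_eq_of_isHomogeneous hq rfl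
  rw [← hpq] at hq0 ⊢
  refine Polynomial.encard_setOf_eval_homogenize_eq_zero_le ?_ hq.natDegree_aeval_X_one_le
  intro hp
  simp [hp] at hq0

theorem encard_setOf_mk_eval_le [Nonempty ι] {F : ι → MvPolynomial σ K} {d : ℕ}
    (hF : ∀ i, (F i).IsHomogeneous d) (S : Set (ℙ K (σ → K))) :
    {y : ℙ K (ι → K) | ∃ (v : σ → K) (hv : v ≠ 0) (h : (fun i => eval v (F i)) ≠ 0),
      mk K v hv ∈ S ∧ y = mk K _ h}.encard ≤ S.encard := by
  classical
  let Φ : ℙ K (σ → K) → ℙ K (ι → K) := fun x =>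
    if h : (fun i => eval x.rep (F i)) ≠ 0 then mk K _ h else Classical.arbitrary _
  refine (Set.encard_le_encard ?_).trans (Set.encard_image_le Φ S)
  rintro _ ⟨v, hv, h, hS, rfl⟩
  refine ⟨_, hS, ?_⟩
  obtain ⟨c, hc⟩ := exists_smul_eq_mk_rep K v hv
  have hrep : (fun i => eval (mk K v hv).rep (F i)) = (c : K) ^ d • fun i => eval v (F i) := by
    funext i
    rw [← hc, Units.smul_def, (hF i).eval_smul, Pi.smul_apply, smul_eq_mul]
  have hne : (fun i => eval (mk K v hv).rep (F i)) ≠ 0 := by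
    rw [hrep]
    exact smul_ne_zero (pow_ne_zero _ c.ne_zero) h
  simp only [Φ, dif_pos hne]
  exact (mk_eq_mk_iff _ _ _ _ _).mpr
    ⟨c ^ d, by rw [hrep, Units.smul_def, Units.val_pow_eq_pow_val]⟩

section OrderedRing

variable {R σ ι : Type*} [CommRing R] [LinearOrder R] [IsStrictOrderedRing R] [Fintype ι]

theorem sum_sq_ne_zero {f : ι → MvPolynomial σ R} (hf : ∃ i, f i ≠ 0) :
    ∑ i, f i ^ 2 ≠ 0 := by
  obtain ⟨j, hj⟩ := hf
  obtain ⟨x, hx⟩ : ∃ x, eval x (f j) ≠ 0 := by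
    by_contra! h
    exact hj (MvPolynomial.funext fun x => by simp [h x])
  intro hsum
  have hx0 := congrArg (eval x) hsum
  simp only [map_sum, map_pow, map_zero] at hx0
  exact hx (pow_eq_zero_iff two_ne_zero |>.mp
    ((Finset.sum_eq_zero_iff_of_nonneg fun i _ => sq_nonneg _).mp hx0 j (Finset.mem_univ j)))

end OrderedRing

end MvPolynomial

theorem image_meets_empty_quadric_in_at_most_2d_points_general (d m : ℕ) (hd : 1 ≤ d)
    (f : Fin (m + 1) → MvPolynomial (Fin 2) ℝ)
    (hf : ∀ i, (f i).IsHomogeneous d)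
    (hne : ∃ i, f i ≠ 0) :
    let image : Set (Projectivization ℂ (Fin (m + 1) → ℂ)) :=
      {x | ∃ (a b : ℂ) (h : (fun i => eval ![a, b] (map (algebraMap ℝ ℂ) (f i))) ≠ 0),
        x = Projectivization.mk ℂ _ h}
    let QE : Set (Projectivization ℂ (Fin (m + 1) → ℂ)) :=
      {x | ∑ i, (x.rep i) ^ 2 = 0}
    (image ∩ QE).Finite ∧ (image ∩ QE).ncard ≤ 2 * d := by
  intro image QE
  set F := fun i => map (algebraMap ℝ ℂ) (f i)
  have hF : ∀ i, (F i).IsHomogeneous d := fun i => (hf i).map _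
  set g := map (algebraMap ℝ ℂ) (∑ i, f i ^ 2)
  have hg : g.IsHomogeneous (2 * d) :=
    (IsHomogeneous.sum _ _ _ fun i _ => mul_comm d 2 ▸ (hf i).pow 2).map _
  have hg0 : g ≠ 0 :=
    (map_injective _ (algebraMap ℝ ℂ).injective).ne_iff' (map_zero _) |>.mpr
      (sum_sq_ne_zero hne)
  -- `QE` is the zero set of this quadratic form, so membership does not depend on the
  -- representative of a point.
  have hQE : (∑ i : Fin (m + 1), X i ^ 2 : MvPolynomial (Fin (m + 1)) ℂ).IsHomogeneous 2 :=
    IsHomogeneous.sum _ _ _ fun i _ => isHomogeneous_X_pow i 2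
  have hsub : image ∩ QE ⊆
      {y | ∃ (v : Fin 2 → ℂ) (hv : v ≠ 0) (h : (fun i => eval v (F i)) ≠ 0),
        Projectivization.mk ℂ v hv ∈ {x : ℙ ℂ (Fin 2 → ℂ) | eval x.rep g = 0} ∧
          y = Projectivization.mk ℂ _ h} := by
    rintro _ ⟨⟨a, b, h, rfl⟩, hQ⟩
    have hv : ![a, b] ≠ 0 := fun hv =>
      h (funext fun i => by rw [hv, (hF i).eval_zero (by omega)]; rfl)
    refine ⟨![a, b], hv, h, ?_, rfl⟩
    have hFQ := (hQE.eval_rep_mk_eq_zero_iff h).mp (by simpa [QE] using hQ)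
    rw [Set.mem_ofPred_eq, hg.eval_rep_mk_eq_zero_iff hv]
    simpa [g, F] using hFQ
  rw [← Set.encard_le_coe_iff_finite_ncard_le]
  calc (image ∩ QE).encard ≤ _ := Set.encard_le_encard hsub
    _ ≤ _ := encard_setOf_mk_eval_le hF _
    _ ≤ _ := by exact_mod_cast hg.encard_setOf_eval_rep_eq_zero_le hg0

/-- The image of a map `ℙ¹ → ℙ^m` given by real binary forms of degree `d`,
not all zero, contains at most `2d` points of the empty quadric
`{[z] : z₀² + ⋯ + z_m² = 0}`. -/
theorem image_meets_empty_quadric_in_at_most_2d_points (d m : ℕ) (hd : 1 ≤ d) (hm : 1 ≤ m)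
    (f : Fin (m + 1) → MvPolynomial (Fin 2) ℝ)
    (hf : ∀ i, (f i).IsHomogeneous d)
    (hne : ∃ i, f i ≠ 0) :
    let image : Set (Projectivization ℂ (Fin (m + 1) → ℂ)) :=
      {x | ∃ (a b : ℂ) (h : (fun i => eval ![a, b] (map (algebraMap ℝ ℂ) (f i))) ≠ 0),
        x = Projectivization.mk ℂ _ h}
    let QE : Set (Projectivization ℂ (Fin (m + 1) → ℂ)) :=
      {x | ∑ i, (x.rep i) ^ 2 = 0}
    (image ∩ QE).Finite ∧ (image ∩ QE).ncard ≤ 2 * d :=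
  image_meets_empty_quadric_in_at_most_2d_points_general d m hd f hf hne
end

section
/- Let d ≥ 1 and let q₁, q₂ ∈ ℂ[z₀,z₁,z₂,z₃] be homogeneous polynomials of degree 2. Let f₀,…,f₃ ∈ ℂ[s,t] be homogeneous polynomials of degree d, not all zero, and let C ⊆ ℙ³(ℂ) be the image of the associated map, i.e., the set of points [f₀(a,b) : ⋯ : f₃(a,b)] over all (a,b) ∈ ℂ² with (f₀(a,b),…,f₃(a,b)) ≠ 0. Let B = {[z] ∈ ℙ³(ℂ) : q₁(z) = q₂(z) = 0} be the base locus of the pencil of quadrics spanned by q₁ and q₂. If C contains at least 2d distinct points of B and C is not contained in B, then there exists (λ, μ) ∈ ℂ² ∖ {(0,0)} such that the composite (λq₁ + μq₂)(f₀,…,f₃) is the zero polynomial; that is, C is contained in the quadric {[z] ∈ ℙ³(ℂ) : (λq₁ + μq₂)(z) = 0} belonging to the pencil. -/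
/-!
Pick a point `x₀ = [f(u₀)]` of `C` off the base locus and take
`(λ, μ) = (q₂(f(u₀)), -q₁(f(u₀)))`, so that `Q = λ q₁ + μ q₂` vanishes at `x₀` and on `B`.
Distinct points of `C` come from non-proportional parameters, so the binary form `Q ∘ f` of
degree `2d` has `2d + 1` distinct zeros in `ℙ¹`. Dehomogenizing, a nonzero binary form of degree
`n` has at most `n` zeros in `ℙ¹` (one for each root, plus `[1 : 0]` only when the degree drops),
so `Q ∘ f = 0`.
-/

open MvPolynomial
open scoped LinearAlgebra.Projectivization

theorem MvPolynomial.IsHomogeneous.eval_smul_s4 {R σ : Type*} [CommSemiring R]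
    {φ : MvPolynomial σ R} {n : ℕ} (hφ : φ.IsHomogeneous n) (c : R) (v : σ → R) :
    eval (c • v) φ = c ^ n * eval v φ := by
  simp only [eval_eq, Finset.mul_sum]
  refine Finset.sum_congr rfl fun m hm => ?_
  have hdeg : ∑ i ∈ m.support, m i = n := by
    simpa [Finsupp.weight_apply, Finsupp.sum] using hφ (mem_support_iff.mp hm)
  simp only [Pi.smul_apply, smul_eq_mul, mul_pow, Finset.prod_mul_distrib,
    Finset.prod_pow_eq_pow_sum, hdeg]
  ring

theorem MvPolynomial.IsHomogeneous.eval_zero_s4 {R σ : Type*} [CommSemiring R]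
    {φ : MvPolynomial σ R} {n : ℕ} (hφ : φ.IsHomogeneous n) (hn : n ≠ 0) :
    eval 0 φ = 0 := by
  simpa [zero_pow hn] using hφ.eval_smul_s4 0 0

theorem MvPolynomial.eval_aeval {R σ τ : Type*} [CommSemiring R] (f : σ → MvPolynomial τ R)
    (φ : MvPolynomial σ R) (v : τ → R) :
    eval v (aeval f φ) = eval (fun i => eval v (f i)) φ := by
  rw [aeval_eq_bind₁]
  exact eval₂Hom_bind₁ _ _ _ _

theorem MvPolynomial.IsHomogeneous.eval_rep_mk_eq_zero_iff_s4 {K σ : Type*} [Field K]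
    {φ : MvPolynomial σ K} {n : ℕ} (hφ : φ.IsHomogeneous n) (v : σ → K) (hv : v ≠ 0) :
    eval (Projectivization.mk K v hv).rep φ = 0 ↔ eval v φ = 0 := by
  obtain ⟨a, ha⟩ := Projectivization.exists_smul_eq_mk_rep K v hv
  rw [← ha, Units.smul_def, hφ.eval_smul_s4, mul_eq_zero, or_iff_right (pow_ne_zero _ a.ne_zero)]

theorem Polynomial.eval_homogenize_of_eq_zero_s4 {R : Type*} [CommSemiring R] (p : Polynomial R)
    (n : ℕ) (x : Fin 2 → R) (hx : x 1 = 0) :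
    MvPolynomial.eval x (p.homogenize n) = p.coeff n * x 0 ^ n := by
  simp only [homogenize, MvPolynomial.eval_sum, MvPolynomial.eval_monomial,
    Finset.Nat.sum_antidiagonal_eq_sum_range_succ_mk]
  rw [Finset.sum_eq_single n]
  · simp
  · intro k hk hkn
    have : n - k ≠ 0 := by simp at hk; omega
    simp [hx, zero_pow this]
  · simp

namespace Projectivization

variable {K : Type*} [Field K]

theorem rep_zero_ne_zero_of_rep_one_eq_zero {z : ℙ K (Fin 2 → K)} (hz : z.rep 1 = 0) :
    z.rep 0 ≠ 0 :=
  fun h0 => z.rep_nonzero (funext <| Fin.forall_fin_two.mpr ⟨h0, hz⟩)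

theorem eq_of_rep_one_eq_zero {z w : ℙ K (Fin 2 → K)} (hz : z.rep 1 = 0) (hw : w.rep 1 = 0) :
    z = w := by
  rw [← z.mk_rep, ← w.mk_rep, mk_eq_mk_iff']
  refine ⟨z.rep 0 / w.rep 0, funext <| Fin.forall_fin_two.mpr ⟨?_, ?_⟩⟩ <;>
    simp [hz, hw, rep_zero_ne_zero_of_rep_one_eq_zero hw]

theorem eq_of_rep_div_rep_eq {z w : ℙ K (Fin 2 → K)} (hz : z.rep 1 ≠ 0) (hw : w.rep 1 ≠ 0)
    (h : z.rep 0 / z.rep 1 = w.rep 0 / w.rep 1) : z = w := by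
  rw [← z.mk_rep, ← w.mk_rep, mk_eq_mk_iff']
  refine ⟨z.rep 1 / w.rep 1, funext <| Fin.forall_fin_two.mpr ⟨?_, ?_⟩⟩
  · rw [div_eq_div_iff hz hw] at h
    simp only [Pi.smul_apply, smul_eq_mul]
    field_simp
    linear_combination -h
  · simp [hw]

end Projectivization

open Projectivization in
theorem Polynomial.card_le_of_eval_homogenize_eq_zero {K : Type*} [Field K] {p : Polynomial K}
    (hp : p ≠ 0) {n : ℕ} (hn : p.natDegree ≤ n) (Z : Finset (ℙ K (Fin 2 → K)))
    (hZ : ∀ z ∈ Z, MvPolynomial.eval z.rep (p.homogenize n) = 0) : Z.card ≤ n := by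
  classical
  have hfinite : (Z.filter (·.rep 1 ≠ 0)).card ≤ p.natDegree := by
    calc _ = ((Z.filter (·.rep 1 ≠ 0)).image fun z => z.rep 0 / z.rep 1).card :=
          (Finset.card_image_of_injOn fun z hz w hw h => eq_of_rep_div_rep_eq
            (Finset.mem_filter.mp hz).2 (Finset.mem_filter.mp hw).2 h).symm
      _ ≤ p.roots.toFinset.card := by
          refine Finset.card_le_card fun t ht => ?_
          obtain ⟨z, hz, rfl⟩ := Finset.mem_image.mp ht
          obtain ⟨hzZ, hz1⟩ := Finset.mem_filter.mp hz
          have := hZ z hzZ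
          rw [eval_homogenize hn _ hz1, mul_eq_zero, or_iff_left (pow_ne_zero _ hz1)] at this
          exact Multiset.mem_toFinset.mpr ((mem_roots hp).mpr this)
      _ ≤ p.natDegree := (Multiset.toFinset_card_le _).trans (card_roots' p)
  have hinfinite : (Z.filter (·.rep 1 = 0)).card ≤ n - p.natDegree := by
    obtain hempty | ⟨z, hz⟩ := (Z.filter (·.rep 1 = 0)).eq_empty_or_nonempty
    · simp [hempty]
    obtain ⟨hzZ, hz1⟩ := Finset.mem_filter.mp hz
    have hcoeff : p.coeff n = 0 := by
      have := hZ z hzZ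
      rwa [eval_homogenize_of_eq_zero_s4 _ _ _ hz1, mul_eq_zero,
        or_iff_left (pow_ne_zero _ (rep_zero_ne_zero_of_rep_one_eq_zero hz1))] at this
    have hlt : p.natDegree < n := lt_of_le_of_ne hn fun h => hp (by
      rw [← leadingCoeff_eq_zero, leadingCoeff, h, hcoeff])
    have hsub : (Z.filter (·.rep 1 = 0)).card ≤ 1 := Finset.card_le_one.mpr fun z hz w hw =>
      eq_of_rep_one_eq_zero (Finset.mem_filter.mp hz).2 (Finset.mem_filter.mp hw).2
    omega
  have := Finset.card_filter_add_card_filter_not (s := Z) (p := (·.rep 1 ≠ 0))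
  simp only [not_not] at this
  omega

theorem MvPolynomial.IsHomogeneous.eq_zero_of_lt_card {K : Type*} [Field K]
    {φ : MvPolynomial (Fin 2) K} {n : ℕ} (hφ : φ.IsHomogeneous n)
    (Z : Finset (ℙ K (Fin 2 → K))) (hZ : ∀ z ∈ Z, eval z.rep φ = 0)
    (hcard : n < Z.card) : φ = 0 := by
  set p : Polynomial K := MvPolynomial.aeval ![Polynomial.X, 1] φ
  have hdeg : p.natDegree ≤ n := by
    simpa using aeval_natDegree_le (n := 1) φ hφ.totalDegree_le ![Polynomial.X, 1]
      (Fin.forall_fin_two.mpr (by simp))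
  have hp : p.homogenize n = φ := Polynomial.homogenize_eq_of_isHomogeneous hφ rfl
  by_contra hφ0
  have hp0 : p ≠ 0 := fun h => hφ0 (by rw [← hp, h, Polynomial.homogenize_zero])
  have := Polynomial.card_le_of_eval_homogenize_eq_zero hp0 hdeg Z (by rwa [hp])
  omega

section ParametrizedCurve

variable {K σ ι : Type*} [Field K] {d : ℕ} {f : ι → MvPolynomial σ K}

theorem Projectivization.mk_eval_smul_eq (hf : ∀ i, (f i).IsHomogeneous d) (u : σ → K) (c : K)
    (hu : (fun i => eval u (f i)) ≠ 0) (hcu : (fun i => eval (c • u) (f i)) ≠ 0) :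
    mk K (fun i => eval (c • u) (f i)) hcu = mk K (fun i => eval u (f i)) hu :=
  (mk_eq_mk_iff' K _ _ hcu hu).mpr ⟨c ^ d, funext fun i => by simp [(hf i).eval_smul_s4]⟩

theorem MvPolynomial.IsHomogeneous.eval_rep_mk_eq_zero_iff_eval_aeval {Q : MvPolynomial ι K}
    {e : ℕ} (hQ : Q.IsHomogeneous e) (v : σ → K) (hv : (fun i => eval v (f i)) ≠ 0) :
    eval (Projectivization.mk K _ hv).rep Q = 0 ↔ eval v (MvPolynomial.aeval f Q) = 0 := by
  rw [hQ.eval_rep_mk_eq_zero_iff_s4, eval_aeval]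

open Projectivization in
theorem MvPolynomial.IsHomogeneous.exists_card_eq_zeros_aeval
    (hf : ∀ i, (f i).IsHomogeneous d) (hd : d ≠ 0) {Q : MvPolynomial ι K} {e : ℕ}
    (hQ : Q.IsHomogeneous e) (T : Finset (ℙ K (ι → K)))
    (hT : ∀ x ∈ T, ∃ (v : σ → K) (hv : (fun i => eval v (f i)) ≠ 0), x = mk K _ hv)
    (hQT : ∀ x ∈ T, eval x.rep Q = 0) :
    ∃ Z : Finset (ℙ K (σ → K)), Z.card = T.card ∧
      ∀ z ∈ Z, eval z.rep (MvPolynomial.aeval f Q) = 0 := by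
  classical
  choose v hv hxv using hT
  have hv0 : ∀ x hx, v x hx ≠ 0 := fun x hx h0 =>
    hv x hx (_root_.funext fun i => by rw [h0, (hf i).eval_zero_s4 hd, Pi.zero_apply])
  let param : T → ℙ K (σ → K) := fun x => mk K (v x x.2) (hv0 x x.2)
  have hparam : Function.Injective param := by
    rintro ⟨x, hx⟩ ⟨y, hy⟩ hxy
    obtain ⟨c, hc⟩ := (mk_eq_mk_iff' K _ _ _ _).mp hxy
    have := mk_eval_smul_eq hf (v y hy) c (hv y hy) (by rw [hc]; exact hv x hx)
    rw [Subtype.mk.injEq, hxv x hx, hxv y hy, ← this]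
    congr 2
    rw [hc]
  refine ⟨T.attach.image param, by rw [Finset.card_image_of_injective _ hparam,
    Finset.card_attach], ?_⟩
  rintro _ hz
  obtain ⟨⟨x, hx⟩, -, rfl⟩ := Finset.mem_image.mp hz
  rw [(hQ.aeval f hf).eval_rep_mk_eq_zero_iff_s4,
    ← hQ.eval_rep_mk_eq_zero_iff_eval_aeval _ (hv x hx), ← hxv x hx]
  exact hQT x hx

end ParametrizedCurve

open Projectivization in
theorem MvPolynomial.IsHomogeneous.aeval_eq_zero_of_mul_lt_card {K ι : Type*} [Field K] {d e : ℕ}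
    {f : ι → MvPolynomial (Fin 2) K} (hf : ∀ i, (f i).IsHomogeneous d) (hd : d ≠ 0)
    {Q : MvPolynomial ι K} (hQ : Q.IsHomogeneous e) (T : Finset (ℙ K (ι → K)))
    (hT : ↑T ⊆ {x | ∃ (a b : K) (hv : (fun i => eval ![a, b] (f i)) ≠ 0), x = mk K _ hv})
    (hQT : ∀ x ∈ T, eval x.rep Q = 0) (hcard : d * e < T.card) :
    MvPolynomial.aeval f Q = 0 := by
  obtain ⟨Z, hZcard, hZ⟩ := hQ.exists_card_eq_zeros_aeval hf hd T (fun x hx => by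
    obtain ⟨a, b, hv, rfl⟩ := hT hx
    exact ⟨_, hv, rfl⟩) hQT
  exact (hQ.aeval f hf).eq_zero_of_lt_card Z hZ (hZcard ▸ hcard)

theorem curve_lies_on_member_of_pencil_general (d : ℕ) (hd : 1 ≤ d)
    (q₁ q₂ : MvPolynomial (Fin 4) ℂ)
    (hq₁ : q₁.IsHomogeneous 2) (hq₂ : q₂.IsHomogeneous 2)
    (f : Fin 4 → MvPolynomial (Fin 2) ℂ)
    (hf : ∀ i, (f i).IsHomogeneous d) :
    let C : Set (Projectivization ℂ (Fin 4 → ℂ)) :=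
      {x | ∃ (a b : ℂ) (h : (fun i => eval ![a, b] (f i)) ≠ 0),
        x = Projectivization.mk ℂ _ h}
    let B : Set (Projectivization ℂ (Fin 4 → ℂ)) :=
      {x | eval x.rep q₁ = 0 ∧ eval x.rep q₂ = 0}
    ∀ S : Finset (Projectivization ℂ (Fin 4 → ℂ)),
      ↑S ⊆ C ∩ B → S.card = 2 * d → ¬ C ⊆ B →
      ∃ lam mu : ℂ, (lam, mu) ≠ (0, 0) ∧
        aeval f (lam • q₁ + mu • q₂) = 0 ∧
        C ⊆ {x | eval x.rep (lam • q₁ + mu • q₂) = 0} := by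
  classical
  intro C B S hS hcard hCB
  obtain ⟨x₀, hx₀C, hx₀B⟩ := Set.not_subset.mp hCB
  obtain ⟨a₀, b₀, hv₀, hx₀⟩ := id hx₀C
  set lam := eval ![a₀, b₀] (aeval f q₂)
  set mu := -eval ![a₀, b₀] (aeval f q₁)
  have hQ : (lam • q₁ + mu • q₂).IsHomogeneous 2 := by
    simpa only [smul_eq_C_mul] using (hq₁.C_mul lam).add (hq₂.C_mul mu)
  have hlm : (lam, mu) ≠ (0, 0) := by
    intro h
    simp only [Prod.mk.injEq, mu, neg_eq_zero] at h
    rw [hx₀] at hx₀B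
    exact hx₀B ⟨(hq₁.eval_rep_mk_eq_zero_iff_eval_aeval _ hv₀).mpr h.2,
      (hq₂.eval_rep_mk_eq_zero_iff_eval_aeval _ hv₀).mpr h.1⟩
  have hzeros : ∀ x ∈ insert x₀ S, eval x.rep (lam • q₁ + mu • q₂) = 0 := by
    intro x hx
    rcases Finset.mem_insert.mp hx with rfl | hxS
    · rw [hx₀, hQ.eval_rep_mk_eq_zero_iff_eval_aeval]
      simp only [map_add, map_smul, smul_eval, lam, mu]
      ring
    · obtain ⟨-, h₁, h₂⟩ := hS hxS
      simp [h₁, h₂]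
  have hG : aeval f (lam • q₁ + mu • q₂) = 0 := by
    refine hQ.aeval_eq_zero_of_mul_lt_card hf (by omega) _ ?_ hzeros ?_
    · rw [Finset.coe_insert]
      exact Set.insert_subset hx₀C fun x hx => (hS hx).1
    · rw [Finset.card_insert_of_notMem fun h => hx₀B (hS h).2]
      omega
  refine ⟨lam, mu, hlm, hG, ?_⟩
  rintro _ ⟨a, b, hv, rfl⟩
  exact (hQ.eval_rep_mk_eq_zero_iff_eval_aeval _ hv).mpr (by rw [hG, map_zero])

/-- A rational curve of degree `d` in `ℙ³(ℂ)` passing through at least `2d`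
points of the base locus of a pencil of quadrics, and not contained in the base locus,
lies on a member of the pencil. -/
theorem curve_lies_on_member_of_pencil (d : ℕ) (hd : 1 ≤ d)
    (q₁ q₂ : MvPolynomial (Fin 4) ℂ)
    (hq₁ : q₁.IsHomogeneous 2) (hq₂ : q₂.IsHomogeneous 2)
    (f : Fin 4 → MvPolynomial (Fin 2) ℂ)
    (hf : ∀ i, (f i).IsHomogeneous d)
    (hne : ∃ i, f i ≠ 0) :
    let C : Set (Projectivization ℂ (Fin 4 → ℂ)) :=
      {x | ∃ (a b : ℂ) (h : (fun i => eval ![a, b] (f i)) ≠ 0),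
        x = Projectivization.mk ℂ _ h}
    let B : Set (Projectivization ℂ (Fin 4 → ℂ)) :=
      {x | eval x.rep q₁ = 0 ∧ eval x.rep q₂ = 0}
    ∀ S : Finset (Projectivization ℂ (Fin 4 → ℂ)),
      ↑S ⊆ C ∩ B → S.card = 2 * d → ¬ C ⊆ B →
      ∃ lam mu : ℂ, (lam, mu) ≠ (0, 0) ∧
        aeval f (lam • q₁ + mu • q₂) = 0 ∧
        C ⊆ {x | eval x.rep (lam • q₁ + mu • q₂) = 0} :=
  curve_lies_on_member_of_pencil_general d hd q₁ q₂ hq₁ hq₂ f hf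
end

section
/- For every n ≥ 1 there exist complex linear subspaces L₁, L₂ ⊆ ℂ^{4n} of dimension 2n, on each of which the quadratic form q(z) = z₀² + ⋯ + z_{4n-1}² vanishes identically, such that the four subspaces L₁, σ(L₁), L₂, σ(L₂) pairwise intersect in {0}, where σ : ℂ^{4n} → ℂ^{4n} is coordinatewise complex conjugation. Consequently, there is no 2-dimensional real linear subspace W ⊆ ℝ^{4n} whose complex span in ℂ^{4n} intersects each of L₁, σ(L₁), L₂, σ(L₂) nontrivially. -/
/-- The complexification of a real subspace `W ⊆ ℝⁿ`: its complex linear span in `ℂⁿ`. -/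
noncomputable def complexSpan (n : ℕ) (W : Submodule ℝ (Fin n → ℝ)) :
    Submodule ℂ (Fin n → ℂ) :=
  Submodule.span ℂ ((fun (w : Fin n → ℝ) => (fun i => (w i : ℂ))) '' (W : Set (Fin n → ℝ)))

/-- Coordinatewise complex conjugation on `ℂⁿ`, as a conjugate-semilinear map. -/
def conjMap (n : ℕ) : (Fin n → ℂ) →ₛₗ[starRingEnd ℂ] (Fin n → ℂ) where
  toFun v := fun i => starRingEnd ℂ (v i)
  map_add' v w := by funext i; simp
  map_smul' c v := by funext i; simp

/-!
Split the coordinates of `ℂ^{4n}` into `n` blocks of four. In every block, `L₁` is cut out by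
`z₁ = i z₀, z₃ = i z₂` and `L₂` by `z₃ = i z₀, z₂ = i z₁`; both are isotropic for
`q = ∑ zₖ²` because `1 + i² = 0`, and their conjugates are given by the same equations with `-i`.

If the complexification `V` of a real plane meets `L₁` in `x ≠ 0`, then `V` also contains
`σx ∈ σL₁`, and `x, σx` span `V`. A point `αx + βσx` of `V` lying in `L₂` is isotropic, but
`q(αx + βσx) = 2αβ ∑ |xₖ|²`, so `α = 0` or `β = 0` and the point lies in `σL₁ ∩ L₂` or
`L₁ ∩ L₂`, both zero.
-/

open Complex ComplexConjugate Module

theorem conjMap_apply {N : ℕ} (v : Fin N → ℂ) (i : Fin N) : conjMap N v i = conj (v i) := rfl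

theorem conjMap_conjMap {N : ℕ} (v : Fin N → ℂ) : conjMap N (conjMap N v) = v :=
  funext fun i => conj_conj (v i)

theorem mem_map_conjMap {N : ℕ} {L : Submodule ℂ (Fin N → ℂ)} {v : Fin N → ℂ} :
    v ∈ L.map (conjMap N) ↔ conjMap N v ∈ L :=
  ⟨by rintro ⟨u, hu, rfl⟩; rwa [conjMap_conjMap], fun h => ⟨_, h, conjMap_conjMap v⟩⟩

section Pairing

variable {N : ℕ} {κ : Type*} (e : κ ⊕ κ ≃ Fin N)

def pairingGraphMap (c : ℂ) : (κ → ℂ) →ₗ[ℂ] (Fin N → ℂ) where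
  toFun u i := Sum.elim u (c • u) (e.symm i)
  map_add' u v := by
    funext i
    simp only [Pi.add_apply]
    rcases e.symm i with k | k <;> simp
  map_smul' a u := by
    funext i
    simp only [Pi.smul_apply, RingHom.id_apply]
    rcases e.symm i with k | k <;> simp [mul_left_comm]

def pairingGraph (c : ℂ) : Submodule ℂ (Fin N → ℂ) :=
  LinearMap.range (pairingGraphMap e c)

variable {e}

theorem mem_pairingGraph {c : ℂ} {v : Fin N → ℂ} :
    v ∈ pairingGraph e c ↔ ∀ k, v (e (.inr k)) = c * v (e (.inl k)) := by
  constructor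
  · rintro ⟨u, rfl⟩ k
    simp [pairingGraphMap]
  · intro hv
    refine ⟨fun k => v (e (.inl k)), funext fun i => ?_⟩
    obtain ⟨k | k, rfl⟩ := e.surjective i <;> simp [pairingGraphMap, hv]

theorem eq_zero_of_mem_pairingGraph {c : ℂ} {v : Fin N → ℂ} (hv : v ∈ pairingGraph e c)
    (h : ∀ k, v (e (.inl k)) = 0) : v = 0 := by
  funext i
  obtain ⟨k | k, rfl⟩ := e.surjective i
  · exact h k
  · simp [mem_pairingGraph.1 hv k, h k]

theorem finrank_pairingGraph [Fintype κ] (c : ℂ) :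
    finrank ℂ (pairingGraph e c) = Fintype.card κ := by
  have hinj : Function.Injective (pairingGraphMap e c) := by
    rw [← LinearMap.ker_eq_bot, LinearMap.ker_eq_bot']
    intro u hu
    funext k
    simpa [pairingGraphMap] using congrFun hu (e (.inl k))
  rw [pairingGraph, LinearMap.finrank_range_of_inj hinj, finrank_fintype_fun_eq_card]

theorem sum_sq_eq_zero_of_mem_pairingGraph [Fintype κ] {c : ℂ} (hc : c ^ 2 = -1)
    {v : Fin N → ℂ} (hv : v ∈ pairingGraph e c) : ∑ i, v i ^ 2 = 0 := by
  rw [← e.sum_comp, Fintype.sum_sum_type, ← Finset.sum_add_distrib]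
  refine Finset.sum_eq_zero fun k _ => ?_
  rw [mem_pairingGraph.1 hv k]
  linear_combination v (e (.inl k)) ^ 2 * hc

theorem pairingGraph_inf_pairingGraph {c d : ℂ} (hcd : c ≠ d) :
    pairingGraph e c ⊓ pairingGraph e d = ⊥ := by
  refine (Submodule.eq_bot_iff _).2 fun v ⟨hc, hd⟩ => eq_zero_of_mem_pairingGraph hc fun k => ?_
  have h : (c - d) * v (e (.inl k)) = 0 := by
    linear_combination (mem_pairingGraph.1 hd k) - (mem_pairingGraph.1 hc k)
  exact (mul_eq_zero.1 h).resolve_left (sub_ne_zero.2 hcd)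

theorem map_conjMap_pairingGraph (c : ℂ) :
    (pairingGraph e c).map (conjMap N) = pairingGraph e (conj c) := by
  ext v
  rw [mem_map_conjMap, mem_pairingGraph, mem_pairingGraph]
  refine forall_congr' fun k => ?_
  conv_rhs => rw [← (RingHom.injective (starRingEnd ℂ)).eq_iff]
  simp [conjMap_apply]

end Pairing

section Blocks

/-- In the `q`-th block of four coordinates, `blockPairing n π` pairs `π j` with `π (2 + j)`:
`swap 1 2` gives the pairs `{0, 1}, {2, 3}` and `swap 2 3` the pairs `{0, 3}, {1, 2}`. -/
def blockPairing (n : ℕ) (π : Equiv.Perm (Fin 4)) :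
    (Fin 2 × Fin n) ⊕ (Fin 2 × Fin n) ≃ Fin (4 * n) :=
  (Equiv.sumProdDistrib _ _ _).symm.trans
    ((Equiv.prodCongr (finSumFinEquiv.trans π) (Equiv.refl _)).trans finProdFinEquiv)

variable {n : ℕ}

theorem blockPairing_inl (π : Equiv.Perm (Fin 4)) (j : Fin 2) (q : Fin n) :
    blockPairing n π (.inl (j, q)) = finProdFinEquiv (π (Fin.castAdd 2 j), q) := rfl

theorem blockPairing_inr (π : Equiv.Perm (Fin 4)) (j : Fin 2) (q : Fin n) :
    blockPairing n π (.inr (j, q)) = finProdFinEquiv (π (Fin.natAdd 2 j), q) := rfl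

/-- Along the cycle of coordinates `0 → 1 → 2 → 3 → 0` the defining relations multiply `z 0` by
`c * d * c / d = c ^ 2 = -1`. -/
theorem pairingGraph_blockPairing_inf_eq_bot {c d : ℂ} (hc : c ^ 2 = -1) (hd : d ≠ 0) :
    pairingGraph (blockPairing n (Equiv.swap 1 2)) c ⊓
      pairingGraph (blockPairing n (Equiv.swap 2 3)) d = ⊥ := by
  refine (Submodule.eq_bot_iff _).2 fun v ⟨hvc, hvd⟩ => eq_zero_of_mem_pairingGraph hvc ?_
  rintro ⟨j, q⟩
  set z : Fin 4 → ℂ := fun r => v (finProdFinEquiv (r, q))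
  have h01 : z 1 = c * z 0 := by
    simpa [blockPairing_inl, blockPairing_inr, Equiv.swap_apply_def] using
      mem_pairingGraph.1 hvc (0, q)
  have h23 : z 3 = c * z 2 := by
    simpa [blockPairing_inl, blockPairing_inr, Equiv.swap_apply_def] using
      mem_pairingGraph.1 hvc (1, q)
  have h03 : z 3 = d * z 0 := by
    simpa [blockPairing_inl, blockPairing_inr, Equiv.swap_apply_def] using
      mem_pairingGraph.1 hvd (0, q)
  have h12 : z 2 = d * z 1 := by
    simpa [blockPairing_inl, blockPairing_inr, Equiv.swap_apply_def] using
      mem_pairingGraph.1 hvd (1, q)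
  have hz0 : z 0 = 0 := by
    have h : 2 * d * z 0 = 0 := by
      linear_combination -h03 + h23 + c * h12 + c * d * h01 + d * z 0 * hc
    simpa [hd] using h
  have hz2 : z 2 = 0 := by rw [h12, h01, hz0]; ring
  fin_cases j
  · simpa [blockPairing_inl, Equiv.swap_apply_def] using hz0
  · simpa [blockPairing_inl, Equiv.swap_apply_def] using hz2

end Blocks

section ComplexSpan

variable {N : ℕ}

theorem map_conjMap_complexSpan (W : Submodule ℝ (Fin N → ℝ)) :
    (complexSpan N W).map (conjMap N) = complexSpan N W := by
  rw [complexSpan, Submodule.map_span, Set.image_image]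
  exact congrArg _ (Set.image_congr fun w _ => funext fun i => conj_ofReal (w i))

theorem finrank_complexSpan_le (W : Submodule ℝ (Fin N → ℝ)) :
    finrank ℂ (complexSpan N W) ≤ finrank ℝ W := by
  let f : (Fin N → ℝ) →ₗ[ℝ] (Fin N → ℂ) := ofRealAm.toLinearMap.compLeft (Fin N)
  let b := Module.finBasis ℝ W
  have hW : W = Submodule.span ℝ (Set.range (W.subtype ∘ b)) := by
    rw [Set.range_comp, ← Submodule.map_span, b.span_eq, Submodule.map_subtype_top]
  have hspan : complexSpan N W = Submodule.span ℂ (Set.range (f ∘ W.subtype ∘ b)) := by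
    rw [Set.range_comp, ← Submodule.span_span_of_tower ℝ, Submodule.span_image, ← hW]
    rfl
  rw [hspan]
  exact (finrank_range_le_card _).trans_eq (Fintype.card_fin _)

theorem conjMap_ne_zero {x : Fin N → ℂ} (hx : x ≠ 0) : conjMap N x ≠ 0 :=
  fun h => hx (by rw [← conjMap_conjMap x, h, map_zero])

theorem sum_sq_smul_add_smul_conjMap {x : Fin N → ℂ} (hx : ∑ k, x k ^ 2 = 0) (α β : ℂ) :
    ∑ k, (α • x + β • conjMap N x) k ^ 2 = 2 * α * β * ∑ k, (normSq (x k) : ℂ) := by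
  have hx' : ∑ k, conj (x k) ^ 2 = 0 := by simpa [map_sum] using congrArg conj hx
  calc ∑ k, (α • x + β • conjMap N x) k ^ 2
      = α ^ 2 * ∑ k, x k ^ 2 + 2 * α * β * ∑ k, x k * conj (x k)
          + β ^ 2 * ∑ k, conj (x k) ^ 2 := by
        simp only [Finset.mul_sum, ← Finset.sum_add_distrib]
        refine Finset.sum_congr rfl fun k _ => ?_
        simp only [Pi.add_apply, Pi.smul_apply, smul_eq_mul, conjMap_apply]
        ring
    _ = 2 * α * β * ∑ k, (normSq (x k) : ℂ) := by simp [hx, hx', mul_conj]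

theorem sum_normSq_ne_zero {x : Fin N → ℂ} (hx : x ≠ 0) : ∑ k, (normSq (x k) : ℂ) ≠ 0 := by
  rw [← ofReal_sum, ofReal_ne_zero, ne_eq,
    Finset.sum_eq_zero_iff_of_nonneg fun k _ => normSq_nonneg _]
  exact fun h => hx (funext fun k => normSq_eq_zero.1 (h k (Finset.mem_univ k)))

theorem linearIndependent_pair_conjMap {L : Submodule ℂ (Fin N → ℂ)}
    (hL : L ⊓ L.map (conjMap N) = ⊥) {x : Fin N → ℂ} (hxL : x ∈ L) (hx : x ≠ 0) :
    LinearIndependent ℂ ![x, conjMap N x] := by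
  refine LinearIndependent.pair_iff.2 fun s t hst => ?_
  have hs : s • x ∈ L ⊓ L.map (conjMap N) := by
    refine ⟨L.smul_mem s hxL, ?_⟩
    rw [eq_neg_of_add_eq_zero_left hst]
    exact neg_mem (Submodule.smul_mem _ t (Submodule.mem_map_of_mem hxL))
  rw [hL, Submodule.mem_bot, smul_eq_zero] at hs
  obtain rfl := hs.resolve_right hx
  rw [zero_smul, zero_add, smul_eq_zero] at hst
  exact ⟨rfl, hst.resolve_right (conjMap_ne_zero hx)⟩

theorem complexSpan_eq_span_pair_conjMap {L : Submodule ℂ (Fin N → ℂ)}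
    (hL : L ⊓ L.map (conjMap N) = ⊥) {W : Submodule ℝ (Fin N → ℝ)} (hW : finrank ℝ W ≤ 2)
    {x : Fin N → ℂ} (hxW : x ∈ complexSpan N W) (hxL : x ∈ L) (hx : x ≠ 0) :
    complexSpan N W = Submodule.span ℂ {x, conjMap N x} := by
  have hσxW : conjMap N x ∈ complexSpan N W := by
    rw [← map_conjMap_complexSpan]
    exact Submodule.mem_map_of_mem hxW
  refine (Submodule.eq_of_le_of_finrank_le ?_ ?_).symm
  · rw [Submodule.span_le, Set.insert_subset_iff, Set.singleton_subset_iff]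
    exact ⟨hxW, hσxW⟩
  · rw [← Matrix.range_cons_cons_empty x (conjMap N x) ![],
      finrank_span_eq_card (linearIndependent_pair_conjMap hL hxL hx), Fintype.card_fin]
    exact (finrank_complexSpan_le W).trans hW

theorem complexSpan_inf_eq_bot_of_inf_ne_bot {L M : Submodule ℂ (Fin N → ℂ)}
    (hL : ∀ v ∈ L, ∑ k, v k ^ 2 = 0) (hM : ∀ v ∈ M, ∑ k, v k ^ 2 = 0)
    (hLL : L ⊓ L.map (conjMap N) = ⊥) (hLM : L ⊓ M = ⊥) (hLM' : L.map (conjMap N) ⊓ M = ⊥)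
    {W : Submodule ℝ (Fin N → ℝ)} (hW : finrank ℝ W ≤ 2) (hWL : complexSpan N W ⊓ L ≠ ⊥) :
    complexSpan N W ⊓ M = ⊥ := by
  obtain ⟨x, ⟨hxW, hxL⟩, hx⟩ := (Submodule.ne_bot_iff _).1 hWL
  refine (Submodule.eq_bot_iff _).2 fun z hz => ?_
  obtain ⟨hzW, hzM⟩ := Submodule.mem_inf.1 hz
  rw [complexSpan_eq_span_pair_conjMap hLL hW hxW hxL hx, Submodule.mem_span_pair] at hzW
  obtain ⟨α, β, rfl⟩ := hzW
  have hαβ : α * β = 0 := by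
    have h := hM _ hzM
    rw [sum_sq_smul_add_smul_conjMap (hL x hxL)] at h
    simpa [sum_normSq_ne_zero hx] using h
  rcases mul_eq_zero.1 hαβ with rfl | rfl
  · rw [zero_smul, zero_add] at hzM ⊢
    exact (Submodule.eq_bot_iff _).1 hLM' _
      ⟨Submodule.smul_mem _ β (Submodule.mem_map_of_mem hxL), hzM⟩
  · rw [zero_smul, add_zero] at hzM ⊢
    exact (Submodule.eq_bot_iff _).1 hLM _ ⟨L.smul_mem α hxL, hzM⟩

end ComplexSpan

theorem exists_conjugate_pairs_no_real_line_general (n : ℕ) :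
    ∃ L₁ L₂ : Submodule ℂ (Fin (4 * n) → ℂ),
      Module.finrank ℂ L₁ = 2 * n ∧ Module.finrank ℂ L₂ = 2 * n ∧
      (∀ v ∈ L₁, ∑ k, (v k) ^ 2 = 0) ∧ (∀ v ∈ L₂, ∑ k, (v k) ^ 2 = 0) ∧
      (∀ i j : Fin 4, i ≠ j →
        (![L₁, Submodule.map (conjMap (4 * n)) L₁, L₂,
            Submodule.map (conjMap (4 * n)) L₂] i) ⊓
        (![L₁, Submodule.map (conjMap (4 * n)) L₁, L₂,
            Submodule.map (conjMap (4 * n)) L₂] j) = ⊥) ∧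
      ¬ ∃ W : Submodule ℝ (Fin (4 * n) → ℝ), Module.finrank ℝ W = 2 ∧
        ∀ i : Fin 4, complexSpan (4 * n) W ⊓
          (![L₁, Submodule.map (conjMap (4 * n)) L₁, L₂,
              Submodule.map (conjMap (4 * n)) L₂] i) ≠ ⊥ := by
  set e₁ := blockPairing n (Equiv.swap 1 2)
  set e₂ := blockPairing n (Equiv.swap 2 3)
  have hI : I ≠ -I := fun h => I_ne_zero (CharZero.eq_neg_self_iff.1 h)
  have hnegI : (-I) ^ 2 = -1 := by rw [neg_sq, I_sq]
  have h₁₁ : pairingGraph e₁ I ⊓ pairingGraph e₁ (-I) = ⊥ := pairingGraph_inf_pairingGraph hI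
  have h₂₂ : pairingGraph e₂ I ⊓ pairingGraph e₂ (-I) = ⊥ := pairingGraph_inf_pairingGraph hI
  have h₁₂ : ∀ c d : ℂ, c ^ 2 = -1 → d ^ 2 = -1 → pairingGraph e₁ c ⊓ pairingGraph e₂ d = ⊥ :=
    fun c d hc hd => pairingGraph_blockPairing_inf_eq_bot hc
      (by rintro rfl; norm_num at hd)
  have hσ (e : (Fin 2 × Fin n) ⊕ (Fin 2 × Fin n) ≃ Fin (4 * n)) :
      (pairingGraph e I).map (conjMap (4 * n)) = pairingGraph e (-I) := by
    rw [map_conjMap_pairingGraph, conj_I]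
  refine ⟨pairingGraph e₁ I, pairingGraph e₂ I, by simp [finrank_pairingGraph],
    by simp [finrank_pairingGraph], fun _ => sum_sq_eq_zero_of_mem_pairingGraph I_sq,
    fun _ => sum_sq_eq_zero_of_mem_pairingGraph I_sq, ?_, ?_⟩
  · intro i j hij
    simp only [hσ]
    fin_cases i <;> fin_cases j <;>
      simp_all [inf_comm, h₁₂ _ _ I_sq hnegI, h₁₂ _ _ hnegI I_sq, h₁₂ _ _ I_sq I_sq,
        h₁₂ _ _ hnegI hnegI]
  · rintro ⟨W, hW, hmeet⟩
    refine hmeet 2 (complexSpan_inf_eq_bot_of_inf_ne_bot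
      (fun _ => sum_sq_eq_zero_of_mem_pairingGraph I_sq)
      (fun _ => sum_sq_eq_zero_of_mem_pairingGraph I_sq) ?_ (h₁₂ _ _ I_sq I_sq) ?_ hW.le (hmeet 0))
      <;> rw [hσ]
    exacts [h₁₁, h₁₂ _ _ hnegI I_sq]

/-- For every `n ≥ 1` there are `2n`-dimensional isotropic subspaces
`L₁, L₂ ⊆ ℂ^{4n}` such that `L₁, σ(L₁), L₂, σ(L₂)` are pairwise disjoint; consequently no
real projective line meets all four of them. -/
theorem exists_conjugate_pairs_no_real_line (n : ℕ) (hn : 1 ≤ n) :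
    ∃ L₁ L₂ : Submodule ℂ (Fin (4 * n) → ℂ),
      Module.finrank ℂ L₁ = 2 * n ∧ Module.finrank ℂ L₂ = 2 * n ∧
      (∀ v ∈ L₁, ∑ k, (v k) ^ 2 = 0) ∧ (∀ v ∈ L₂, ∑ k, (v k) ^ 2 = 0) ∧
      (∀ i j : Fin 4, i ≠ j →
        (![L₁, Submodule.map (conjMap (4 * n)) L₁, L₂,
            Submodule.map (conjMap (4 * n)) L₂] i) ⊓
        (![L₁, Submodule.map (conjMap (4 * n)) L₁, L₂,
            Submodule.map (conjMap (4 * n)) L₂] j) = ⊥) ∧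
      ¬ ∃ W : Submodule ℝ (Fin (4 * n) → ℝ), Module.finrank ℝ W = 2 ∧
        ∀ i : Fin 4, complexSpan (4 * n) W ⊓
          (![L₁, Submodule.map (conjMap (4 * n)) L₁, L₂,
              Submodule.map (conjMap (4 * n)) L₂] i) ≠ ⊥ :=
  exists_conjugate_pairs_no_real_line_general n
end

section
/- Let n ≥ 1 and let q(z) = z₀² + ⋯ + z_{4n-1}² on ℂ^{4n}. Let L₁, …, L₆ ⊆ ℂ^{4n} be complex linear subspaces of dimension 2n such that Lᵢ ∩ Lⱼ = {0} for all i ≠ j, and such that q vanishes identically on each Lᵢ. Then there do not exist homogeneous polynomials f₀,…,f_{4n-1} ∈ ℝ[s,t] of degree 2, not all zero, such that for every j = 1,…,6 there is some (a_j, b_j) ∈ ℂ² with (f₀(a_j,b_j), …, f_{4n-1}(a_j,b_j)) a nonzero vector of L_j. In other words, no conic in ℙ^{4n-1}(ℂ) parametrized by real quadratic forms meets all six projectivized subspaces ℙ(L₁), …, ℙ(L₆). -/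
/-!
Let `G = ∑ fᵢ²`, a real binary quartic. Since every `Lⱼ` is isotropic, `G` vanishes at the six
parameters `(aⱼ, bⱼ)`, and these are pairwise non-proportional because the `fᵢ` are homogeneous and
the `Lⱼ` meet only in `0`. A binary form of degree `m` vanishing at `m + 2` distinct points of `ℙ¹` is
zero: at most one of them lies at infinity, the others are roots of its dehomogenization. So `G = 0`,
and a vanishing sum of squares of real polynomials has every summand zero.
-/

open MvPolynomial

theorem Projectivization.mk_eq_mk_of_mul_eq_mul {K : Type*} [Field K] {v w : Fin 2 → K}
    (hv : v ≠ 0) (hw : w ≠ 0) (h : v 0 * w 1 = v 1 * w 0) :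
    mk K v hv = mk K w hw := by
  rw [mk_eq_mk_iff']
  by_cases hw₁ : w 1 = 0
  · have hw₀ : w 0 ≠ 0 := fun hw₀ => hw (by ext i; fin_cases i <;> simp [hw₀, hw₁])
    have hv₁ : v 1 = 0 := by simpa [hw₁, hw₀] using h.symm
    refine ⟨v 0 / w 0, funext fun i => ?_⟩
    fin_cases i <;> simp [hw₀, hw₁, hv₁]
  · refine ⟨v 1 / w 1, funext fun i => ?_⟩
    fin_cases i
    · show v 1 / w 1 * w 0 = v 0
      field_simp
      linear_combination -h
    · simp [hw₁]

namespace MvPolynomial.IsHomogeneous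

variable {R : Type*} [CommSemiring R]

theorem eval_smul_s7 {σ : Type*} [Fintype σ] {p : MvPolynomial σ R} {m : ℕ}
    (hp : p.IsHomogeneous m) (c : R) (x : σ → R) :
    eval (c • x) p = c ^ m * eval x p := by
  rw [eval_eq', eval_eq', Finset.mul_sum]
  refine Finset.sum_congr rfl fun d hd => ?_
  have hd : ∑ i, d i = m := by
    rw [← Finsupp.degree_eq_sum, Finsupp.degree_eq_weight_one]; exact hp (mem_support_iff.mp hd)
  simp only [Pi.smul_apply, smul_eq_mul, mul_pow, Finset.prod_mul_distrib,
    Finset.prod_pow_eq_pow_sum, hd]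
  ring

theorem natDegree_aeval_X_one_le_s7 {p : MvPolynomial (Fin 2) R} {m : ℕ} (hp : p.IsHomogeneous m) :
    (MvPolynomial.aeval ![(Polynomial.X : Polynomial R), 1] p).natDegree ≤ m := by
  rw [p.as_sum, map_sum]
  refine Polynomial.natDegree_sum_le_of_forall_le _ _ fun d hd => ?_
  have hd : d 0 + d 1 = m := by
    rw [← Fin.sum_univ_two (f := fun i => d i), ← Finsupp.degree_eq_sum,
      Finsupp.degree_eq_weight_one]
    exact hp (mem_support_iff.mp hd)
  rw [aeval_monomial, Finsupp.prod_fintype _ _ (by simp), Fin.prod_univ_two]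
  simp only [Matrix.cons_val_zero, Matrix.cons_val_one, one_pow, mul_one]
  exact (Polynomial.natDegree_C_mul_X_pow_le _ _).trans (by omega)

theorem eq_zero_of_eval_eq_zero_of_injective {K : Type*} [Field K] {G : MvPolynomial (Fin 2) K}
    {m : ℕ} (hG : G.IsHomogeneous m) {ι : Type*} [Fintype ι] {v : ι → Fin 2 → K}
    (hv : ∀ j, v j ≠ 0) (hinj : Function.Injective fun j => Projectivization.mk K (v j) (hv j))
    (hcard : m + 1 < Fintype.card ι) (hzero : ∀ j, eval (v j) G = 0) :
    G = 0 := by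
  classical
  set p := MvPolynomial.aeval ![(Polynomial.X : Polynomial K), 1] G
  have hpG : p.homogenize m = G := Polynomial.homogenize_eq_of_isHomogeneous hG rfl
  have hpdeg : p.natDegree ≤ m := hG.natDegree_aeval_X_one_le_s7
  have hinfty : Fintype.card {j // v j 1 = 0} ≤ 1 :=
    Fintype.card_le_one_iff.mpr fun j k => Subtype.ext <| hinj <|
      Projectivization.mk_eq_mk_of_mul_eq_mul _ _ (by rw [j.2, k.2, mul_zero, zero_mul])
  have hroot : ∀ j : {j // v j 1 ≠ 0}, p.eval (v j 0 / v j 1) = 0 := fun j => by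
    simpa [← hpG, Polynomial.eval_homogenize hpdeg _ j.2, j.2] using hzero j
  have hratio : Function.Injective fun j : {j // v j 1 ≠ 0} => v j 0 / v j 1 := by
    intro j k hjk
    refine Subtype.ext <| hinj <| Projectivization.mk_eq_mk_of_mul_eq_mul _ _ ?_
    rw [div_eq_div_iff j.2 k.2] at hjk
    linear_combination hjk
  have hp : p = 0 := Polynomial.eq_zero_of_natDegree_lt_card_of_eval_eq_zero p hratio hroot <| by
    rw [Fintype.card_subtype_compl]; omega
  rw [← hpG, hp, Polynomial.homogenize_zero]

end MvPolynomial.IsHomogeneous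

namespace MvPolynomial

theorem eq_zero_of_sum_sq_eq_zero {R σ ι : Type*} [Field R] [LinearOrder R]
    [IsStrictOrderedRing R] {s : Finset ι} {f : ι → MvPolynomial σ R}
    (h : ∑ i ∈ s, f i ^ 2 = 0) {i : ι} (hi : i ∈ s) : f i = 0 := by
  refine funext fun x => ?_
  have hx : ∑ i ∈ s, eval x (f i) ^ 2 = 0 := by simpa using congrArg (eval x) h
  simpa using (Finset.sum_eq_zero_iff_of_nonneg fun i _ => sq_nonneg _).mp hx i hi

variable {K σ κ ι : Type*} [Field K] [Fintype σ] {F : κ → MvPolynomial σ K} {d : ℕ}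

theorem eval_smul_of_forall_isHomogeneous (hF : ∀ i, (F i).IsHomogeneous d) (c : K)
    (x : σ → K) : (fun i => eval (c • x) (F i)) = c ^ d • fun i => eval x (F i) :=
  _root_.funext fun i => (hF i).eval_smul_s7 c x

theorem injective_mk_of_eval_mem_of_pairwise_inf_eq_bot (hF : ∀ i, (F i).IsHomogeneous d)
    {L : ι → Submodule K (κ → K)} (hL : Pairwise fun j k => L j ⊓ L k = ⊥)
    {v : ι → σ → K} (hv : ∀ j, v j ≠ 0) (hne : ∀ j, (fun i => eval (v j) (F i)) ≠ 0)
    (hmem : ∀ j, (fun i => eval (v j) (F i)) ∈ L j) :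
    Function.Injective fun j => Projectivization.mk K (v j) (hv j) := by
  intro j k hjk
  by_contra hjk'
  obtain ⟨c, hc⟩ := (Projectivization.mk_eq_mk_iff' K _ _ (hv j) (hv k)).mp hjk
  have hk : (fun i => eval (v j) (F i)) ∈ L k := by
    rw [← hc, eval_smul_of_forall_isHomogeneous hF]
    exact (L k).smul_mem _ (hmem k)
  have h₀ : (fun i => eval (v j) (F i)) ∈ L j ⊓ L k := ⟨hmem j, hk⟩
  rw [hL hjk', Submodule.mem_bot] at h₀
  exact hne j h₀

end MvPolynomial

theorem no_real_conic_meets_six_isotropic_subspaces_general (n : ℕ)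
    (L : Fin 6 → Submodule ℂ (Fin (4 * n) → ℂ))
    (hdisj : ∀ i j, i ≠ j → L i ⊓ L j = ⊥)
    (hiso : ∀ i, ∀ v ∈ L i, ∑ k, (v k) ^ 2 = 0) :
    ¬ ∃ f : Fin (4 * n) → MvPolynomial (Fin 2) ℝ,
      (∀ i, (f i).IsHomogeneous 2) ∧ (∃ i, f i ≠ 0) ∧
      ∀ j : Fin 6, ∃ a b : ℂ,
        (fun i => eval ![a, b] (map (algebraMap ℝ ℂ) (f i))) ≠ 0 ∧
        (fun i => eval ![a, b] (map (algebraMap ℝ ℂ) (f i))) ∈ L j := by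
  rintro ⟨f, hhom, ⟨i₀, hf₀⟩, hmeet⟩
  choose a b hne hmem using hmeet
  have hFhom (i : Fin (4 * n)) : (map (algebraMap ℝ ℂ) (f i)).IsHomogeneous 2 := (hhom i).map _
  let v : Fin 6 → Fin 2 → ℂ := fun j => ![a j, b j]
  have hv (j : Fin 6) : v j ≠ 0 := fun h₀ => hne j <| by
    have h := eval_smul_of_forall_isHomogeneous hFhom 0 (v j)
    rwa [zero_smul, ← h₀, zero_pow two_ne_zero, zero_smul] at h
  have hG : ∑ i, map (algebraMap ℝ ℂ) (f i) ^ 2 = 0 :=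
    (IsHomogeneous.sum _ _ 4 fun i _ => (hFhom i).pow 2).eq_zero_of_eval_eq_zero_of_injective hv
      (injective_mk_of_eval_mem_of_pairwise_inf_eq_bot hFhom hdisj hv hne hmem) (by simp)
      fun j => by simpa using hiso j _ (hmem j)
  have hf : ∑ i, f i ^ 2 = 0 := map_injective _ (algebraMap ℝ ℂ).injective (by simpa using hG)
  exact hf₀ (eq_zero_of_sum_sq_eq_zero hf (Finset.mem_univ i₀))

/-- If `L₁,…,L₆` are pairwise disjoint `2n`-dimensional isotropic subspaces of
`ℂ^{4n}` for the standard quadratic form, then no conic parametrized by real binary quadratic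
forms meets all six projectivized subspaces. -/
theorem no_real_conic_meets_six_isotropic_subspaces (n : ℕ) (hn : 1 ≤ n)
    (L : Fin 6 → Submodule ℂ (Fin (4 * n) → ℂ))
    (hdim : ∀ i, Module.finrank ℂ (L i) = 2 * n)
    (hdisj : ∀ i j, i ≠ j → L i ⊓ L j = ⊥)
    (hiso : ∀ i, ∀ v ∈ L i, ∑ k, (v k) ^ 2 = 0) :
    ¬ ∃ f : Fin (4 * n) → MvPolynomial (Fin 2) ℝ,
      (∀ i, (f i).IsHomogeneous 2) ∧ (∃ i, f i ≠ 0) ∧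
      ∀ j : Fin 6, ∃ a b : ℂ,
        (fun i => eval ![a, b] (map (algebraMap ℝ ℂ) (f i))) ≠ 0 ∧
        (fun i => eval ![a, b] (map (algebraMap ℝ ℂ) (f i))) ∈ L j :=
  no_real_conic_meets_six_isotropic_subspaces_general n L hdisj hiso
end

section
/- There exist bihomogeneous polynomials F, G ∈ ℝ[s,t,u,v] of bidegree (2,1) (homogeneous of degree 2 in (s,t) and of degree 1 in (u,v)) such that F and G have exactly four common zeros in ℙ¹(ℂ) × ℙ¹(ℂ), and none of these common zeros lies in ℙ¹(ℝ) × ℙ¹(ℝ). -/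
open MvPolynomial

/-- A point of `ℙ¹(ℂ)` is real if it has a representative with real coordinates. -/
def IsRealPoint (x : Projectivization ℂ (Fin 2 → ℂ)) : Prop :=
  ∃ (v : Fin 2 → ℝ) (h : (fun i => (v i : ℂ)) ≠ 0),
    x = Projectivization.mk ℂ _ h

/-!
Take `F = s²u + t²v` and `G = t²u - s²v`. As linear forms in `(u, v)` they have the
coefficient matrix `[[s², t²], [t², -s²]]`, so a common zero forces its determinant
`-(s⁴ + t⁴)` to vanish. Hence `t ≠ 0` and `z = s/t` is one of the four roots of `z⁴ = -1`,
none of them real, and then `[u : v] = [z² : 1]` is determined by `z`.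
-/

open Projectivization
open scoped LinearAlgebra.Projectivization

/-- Bidegree on `ℙ¹ × ℙ¹` as an `ℕ × ℕ`-valued weight on the variables `s, t, u, v`. -/
def bidegreeWeight : Fin 4 → ℕ × ℕ := ![(1, 0), (1, 0), (0, 1), (0, 1)]

lemma weight_bidegreeWeight (m : Fin 4 →₀ ℕ) :
    Finsupp.weight bidegreeWeight m = (m 0 + m 1, m 2 + m 3) := by
  rw [Finsupp.weight_apply, Finsupp.sum_fintype _ _ (by simp)]
  simp only [Fin.sum_univ_four, bidegreeWeight]
  ext <;> simp

lemma bidegree_eq_of_mem_support {R : Type*} [CommSemiring R]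
    {p : MvPolynomial (Fin 4) R} {a b : ℕ} (hp : IsWeightedHomogeneous bidegreeWeight p (a, b))
    {m : Fin 4 →₀ ℕ} (hm : m ∈ p.support) : m 0 + m 1 = a ∧ m 2 + m 3 = b := by
  simpa [weight_bidegreeWeight] using hp (mem_support_iff.mp hm)

lemma fin_two_ne_zero_iff {M : Type*} [Zero M] {v : Fin 2 → M} :
    v ≠ 0 ↔ v 0 ≠ 0 ∨ v 1 ≠ 0 := by
  simp only [ne_eq, funext_iff, Fin.forall_fin_two, Pi.zero_apply]
  tauto

section AffineChart

variable {K : Type*} [Field K]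

noncomputable def affinePt (z : K) : ℙ K (Fin 2 → K) :=
  mk K ![z, 1] (fin_two_ne_zero_iff.mpr (Or.inr one_ne_zero))

lemma mk_eq_affinePt_iff {v : Fin 2 → K} (hv : v ≠ 0) (z : K) :
    mk K v hv = affinePt z ↔ v 0 = z * v 1 := by
  rw [affinePt, mk_eq_mk_iff']
  constructor
  · rintro ⟨a, rfl⟩
    simp [mul_comm]
  · intro h
    refine ⟨v 1, funext fun i => ?_⟩
    fin_cases i <;> simp [h, mul_comm]

lemma affinePt_injective : Function.Injective (affinePt (K := K)) := fun z w h => by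
  simpa using (mk_eq_affinePt_iff _ w).mp h

lemma bidegree21_commonZero_iff {v w : Fin 2 → K} (hv : v ≠ 0) (hw : w ≠ 0) :
    v 0 ^ 2 * w 0 + v 1 ^ 2 * w 1 = 0 ∧ v 1 ^ 2 * w 0 - v 0 ^ 2 * w 1 = 0 ↔
      ∃ z, z ^ 4 = -1 ∧ v 0 = z * v 1 ∧ w 0 = z ^ 2 * w 1 := by
  constructor
  · rintro ⟨hF, hG⟩
    have hres : (v 0 ^ 4 + v 1 ^ 4) * w 0 = 0 ∧ (v 0 ^ 4 + v 1 ^ 4) * w 1 = 0 :=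
      ⟨by linear_combination v 0 ^ 2 * hF + v 1 ^ 2 * hG,
       by linear_combination v 1 ^ 2 * hF - v 0 ^ 2 * hG⟩
    have hdet : v 0 ^ 4 + v 1 ^ 4 = 0 := by
      rcases fin_two_ne_zero_iff.mp hw with h | h
      · exact (mul_eq_zero.mp hres.1).resolve_right h
      · exact (mul_eq_zero.mp hres.2).resolve_right h
    have hv1 : v 1 ≠ 0 := by
      intro h
      simp_all [fin_two_ne_zero_iff]
    refine ⟨v 0 / v 1, ?_, by field_simp, ?_⟩
    · field_simp
      linear_combination hdet
    · field_simp
      linear_combination hG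
  · rintro ⟨z, hz, hv0, hw0⟩
    rw [hv0, hw0]
    constructor
    · linear_combination v 1 ^ 2 * w 1 * hz
    · ring

end AffineChart

lemma exists_ofReal_of_isRealPoint_affinePt {z : ℂ} (h : IsRealPoint (affinePt z)) :
    ∃ r : ℝ, (r : ℂ) = z := by
  obtain ⟨v, hv, hz⟩ := h
  have hv0 : (v 0 : ℂ) = z * v 1 := (mk_eq_affinePt_iff hv z).mp hz.symm
  have hv1 : (v 1 : ℂ) ≠ 0 := by
    rintro h1
    exact hv (funext fun i => by fin_cases i <;> simp_all)
  exact ⟨v 0 / v 1, by push_cast; field_simp; linear_combination hv0⟩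

lemma ncard_pow_eq {n : ℕ} (hn : 0 < n) {a : ℂ} (ha : a ≠ 0) :
    {z : ℂ | z ^ n = a}.ncard = n := by
  classical
  have hζ := Complex.isPrimitiveRoot_exp n hn.ne'
  have hset : {z : ℂ | z ^ n = a} = ↑(Polynomial.nthRootsFinset n a) := by
    ext z
    simp [Polynomial.mem_nthRootsFinset hn]
  rw [hset, Set.ncard_coe_finset, Polynomial.nthRootsFinset_def,
    Multiset.toFinset_card_of_nodup (hζ.nthRoots_nodup ha), hζ.card_nthRoots,
    if_pos (IsAlgClosed.exists_pow_nat_eq a hn)]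

/-- There exist real bihomogeneous forms `F, G` of bidegree `(2,1)` on
`ℙ¹ × ℙ¹` with exactly four common complex zeros, none of them real. -/
theorem exists_bidegree21_curves_no_real_intersection :
    ∃ F G : MvPolynomial (Fin 4) ℝ,
      (∀ m ∈ F.support, m 0 + m 1 = 2 ∧ m 2 + m 3 = 1) ∧
      (∀ m ∈ G.support, m 0 + m 1 = 2 ∧ m 2 + m 3 = 1) ∧
      let Z : Set (Projectivization ℂ (Fin 2 → ℂ) × Projectivization ℂ (Fin 2 → ℂ)) :=
        {x | eval ![x.1.rep 0, x.1.rep 1, x.2.rep 0, x.2.rep 1]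
              (map (algebraMap ℝ ℂ) F) = 0 ∧
             eval ![x.1.rep 0, x.1.rep 1, x.2.rep 0, x.2.rep 1]
              (map (algebraMap ℝ ℂ) G) = 0}
      Z.ncard = 4 ∧ ∀ z ∈ Z, ¬ (IsRealPoint z.1 ∧ IsRealPoint z.2) := by
  have hX := isWeightedHomogeneous_X ℝ bidegreeWeight
  refine ⟨X 0 ^ 2 * X 2 + X 1 ^ 2 * X 3, X 1 ^ 2 * X 2 - X 0 ^ 2 * X 3,
    fun _ => bidegree_eq_of_mem_support
      ((((hX 0).pow 2).mul (hX 2)).add (((hX 1).pow 2).mul (hX 3))),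
    fun _ => bidegree_eq_of_mem_support
      ((((hX 1).pow 2).mul (hX 2)).sub (((hX 0).pow 2).mul (hX 3))), ?_⟩
  intro Z
  have hZ : Z = (fun z => (affinePt z, affinePt (z ^ 2))) '' {z : ℂ | z ^ 4 = -1} := by
    ext ⟨P, Q⟩
    conv_rhs => rw [← P.mk_rep, ← Q.mk_rep]
    simp only [Z, Set.mem_ofPred_eq, Set.mem_image, Prod.mk.injEq, eq_comm (b := mk ℂ _ _),
      mk_eq_affinePt_iff]
    simpa using bidegree21_commonZero_iff P.rep_nonzero Q.rep_nonzero
  rw [hZ, Set.ncard_image_of_injective _ fun z w h => affinePt_injective (congrArg Prod.fst h),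
    ncard_pow_eq four_pos (by norm_num)]
  refine ⟨rfl, ?_⟩
  rintro _ ⟨z, hz : z ^ 4 = -1, rfl⟩ ⟨hreal, -⟩
  obtain ⟨r, rfl⟩ := exists_ofReal_of_isRealPoint_affinePt hreal
  have hr : r ^ 4 = -1 := by exact_mod_cast hz
  linarith [Even.pow_nonneg (by decide : Even 4) r]
end
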